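/- arXiv:1606.08729 — 3 statements merged into one kernel-verified Lean document; each statement's English description precedes it below -/
import Mathlib

section
/- Let (Z,d,μ) be a Q-Ahlfors regular metric measure space, let 0 < s ≤ 1 and p > Q/s, and let f ∈ L¹_loc(Z,μ) admit a Hajłasz s-gradient g ∈ L^p(μ). Then there exist a constant C > 0, depending only on Q, s, p and the Ahlfors regularity constants, and a continuous function f̃ : Z → ℂ with f̃ = f μ-almost everywhere and |f̃(ξ) − f̃(η)| ≤ C d(ξ,η)^{s−Q/p} ‖g‖_{L^p(μ)} for all ξ,η ∈ Z. In particular, for this representative every point of Z is a generalized Lebesgue point, i.e. lim_{r→0} (1/μ(B(ξ,r))) ∫_{B(ξ,r)} |f̃ − f̃(ξ)| dμ = 0 for all ξ ∈ Z. (Remark 3.2: for p > Q/s the exceptional set Z ∖ Λ_f is empty.) -/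
open MeasureTheory Metric Filter Set
open scoped Classical ENNReal

noncomputable section

variable {Z : Type*} [MetricSpace Z] [MeasurableSpace Z] [BorelSpace Z]

/-- A metric measure space: every ball has positive and finite measure. -/
def IsMetricMeasure (m : Measure Z) : Prop :=
  ∀ (ξ : Z) (r : ℝ), 0 < r → 0 < m (ball ξ r) ∧ m (ball ξ r) < ⊤

/-- `m` is `Q`-Ahlfors regular on the set `S` with constant `C ≥ 1`:
`C⁻¹ r^Q ≤ m (B(ξ,r)) ≤ C r^Q` for `ξ ∈ S` and `0 < r < diam S`. -/
def IsAhlforsOn (m : Measure Z) (S : Set Z) (Q C : ℝ) : Prop :=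
  1 ≤ C ∧ ∀ ξ ∈ S, ∀ r : ℝ, 0 < r → ENNReal.ofReal r < EMetric.diam S →
    ENNReal.ofReal (C⁻¹ * r ^ Q) ≤ m (ball ξ r) ∧ m (ball ξ r) ≤ ENNReal.ofReal (C * r ^ Q)

/-- `F` is a porous subset of `Z`: there is `c ∈ (0,1)` such that every ball of radius
`r < diam Z` meeting `F` contains a ball of radius `c·r` disjoint from `F`. -/
def IsPorous (F : Set Z) : Prop :=
  ∃ c : ℝ, 0 < c ∧ c < 1 ∧ ∀ (ξ : Z) (r : ℝ), 0 < r →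
    ENNReal.ofReal r < EMetric.diam (Set.univ : Set Z) → (ball ξ r ∩ F).Nonempty →
      ∃ η : Z, ball η (c * r) ⊆ ball ξ r \ F

/-- `(g k)_{k ∈ ℤ}` is a fractional `s`-gradient of `f` on the set `F`:
each `g k` is nonnegative and measurable, and
`|f ξ - f η| ≤ d(ξ,η)^s (g k ξ + g k η)` whenever `ξ, η ∈ F` and
`2^(-k-1) ≤ d(ξ,η) < 2^(-k)`. -/
def IsFracGradOn (F : Set Z) (s : ℝ) (f : Z → ℂ) (g : ℤ → Z → ℝ) : Prop :=
  (∀ k : ℤ, Measurable (g k)) ∧ (∀ (k : ℤ) (x : Z), 0 ≤ g k x) ∧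
  ∀ k : ℤ, ∀ ξ ∈ F, ∀ η ∈ F,
    (2 : ℝ) ^ (-k - 1) ≤ dist ξ η → dist ξ η < (2 : ℝ) ^ (-k) →
    ‖f ξ - f η‖ ≤ dist ξ η ^ s * (g k ξ + g k η)

/-- `g` is a Hajłasz `s`-gradient of `f` on `Z`. -/
def IsHajlaszGrad (s : ℝ) (f : Z → ℂ) (g : Z → ℝ) : Prop :=
  Measurable g ∧ (∀ x : Z, 0 ≤ g x) ∧
  ∀ ξ η : Z, ‖f ξ - f η‖ ≤ dist ξ η ^ s * (g ξ + g η)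

/-- The `L^p` norm (as an extended real) of a nonnegative function `g`. -/
def lpNorm (m : Measure Z) (p : ℝ) (g : Z → ℝ) : ℝ≥0∞ :=
  (∫⁻ x, ENNReal.ofReal (g x) ^ p ∂m) ^ (1 / p)

/-- The `L^p` norm (as an extended real) of a complex-valued function `f`. -/
def lpNormC (m : Measure Z) (p : ℝ) (f : Z → ℂ) : ℝ≥0∞ :=
  (∫⁻ x, (‖f x‖₊ : ℝ≥0∞) ^ p ∂m) ^ (1 / p)

/-- The `ℓ^q(ℤ; L^p(m))` norm of a sequence of nonnegative functions, i.e. the Besov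
seminorm `(Σ_k ‖g k‖_{L^p}^q)^(1/q)` (supremum over `k` when `q = ∞`). -/
def besovNorm (m : Measure Z) (p : ℝ) (q : ℝ≥0∞) (g : ℤ → Z → ℝ) : ℝ≥0∞ :=
  if q = ⊤ then ⨆ k : ℤ, lpNorm m p (g k)
  else (∑' k : ℤ, lpNorm m p (g k) ^ q.toReal) ^ (1 / q.toReal)

/-- The `L^p(m; ℓ^q(ℤ))` norm of a sequence of nonnegative functions, i.e. the
Triebel–Lizorkin seminorm `‖(Σ_k (g k)^q)^(1/q)‖_{L^p}` (pointwise supremum over `k`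
when `q = ∞`). -/
def tlNorm (m : Measure Z) (p : ℝ) (q : ℝ≥0∞) (g : ℤ → Z → ℝ) : ℝ≥0∞ :=
  (∫⁻ x, (if q = ⊤ then ⨆ k : ℤ, ENNReal.ofReal (g k x)
      else (∑' k : ℤ, ENNReal.ofReal (g k x) ^ q.toReal) ^ (1 / q.toReal)) ^ p ∂m) ^ (1 / p)

/-- `c` is the limit of the averages of `f` over the balls `B(ξ,r)` as `r → 0⁺`. -/
def TraceAt (m : Measure Z) (f : Z → ℂ) (ξ : Z) (c : ℂ) : Prop :=
  Tendsto (fun r : ℝ => (m (ball ξ r)).toReal⁻¹ • ∫ x in ball ξ r, f x ∂m)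
    (nhdsWithin 0 (Ioi 0)) (nhds c)

open scoped Topology

/-!
The Hajłasz inequality holds at every point, so `f` itself is the representative. By the lower
Ahlfors bound, every ball `B(ζ, r)` with `r < diam Z` contains a point where `g^p` is at most its
average, hence where `g ≤ CZ^{1/p} ‖g‖_p r^{-Q/p}`. Chaining such points at the dyadic scales
`r / 2^n` towards `ζ`, the Hajłasz inequality bounds the increments of `f` along the chain by a
geometric series of ratio `2^{-(s - Q/p)} < 1`, while `f` along the chain tends to `f ζ` because
`g ζ` is finite. Joining the chains of two points gives the `(s - Q/p)`-Hölder bound, and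
continuity makes every point a Lebesgue point.
-/

section HolderEstimate

variable {X E : Type*} [PseudoMetricSpace X] [SeminormedAddCommGroup E]
  {f : X → E} {g : X → ℝ} {s β A : ℝ}

lemma norm_sub_le_of_le_mul_rpow_neg (hf : ∀ x y, ‖f x - f y‖ ≤ dist x y ^ s * (g x + g y))
    (hg : ∀ x, 0 ≤ g x) (hs : 0 ≤ s) {x y : X} {c r : ℝ} (hr : 0 < r)
    (hxy : dist x y ≤ c * r) (hx : g x ≤ A * r ^ (-β)) (hy : g y ≤ A * r ^ (-β)) :
    ‖f x - f y‖ ≤ 2 * c ^ s * A * r ^ (s - β) := by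
  have hc : 0 ≤ c := nonneg_of_mul_nonneg_left (dist_nonneg.trans hxy) hr
  calc ‖f x - f y‖ ≤ dist x y ^ s * (g x + g y) := hf x y
    _ ≤ (c * r) ^ s * (A * r ^ (-β) + A * r ^ (-β)) := by
      gcongr
      exact add_nonneg (hg x) (hg y)
    _ = 2 * c ^ s * A * (r ^ s * r ^ (-β)) := by rw [Real.mul_rpow hc hr.le]; ring
    _ = 2 * c ^ s * A * r ^ (s - β) := by rw [← Real.rpow_add hr, ← sub_eq_add_neg]

lemma exists_mem_ball_norm_sub_le (hf : ∀ x y, ‖f x - f y‖ ≤ dist x y ^ s * (g x + g y))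
    (hg : ∀ x, 0 ≤ g x) (hs : 0 < s) (hβ : 0 ≤ β) (hβs : β < s) (ζ : X) {ρ : ℝ} (hρ : 0 < ρ)
    (hgood : ∀ r, 0 < r → r ≤ ρ → ∃ x ∈ ball ζ r, g x ≤ A * r ^ (-β)) :
    ∃ x ∈ ball ζ ρ, g x ≤ A * ρ ^ (-β) ∧
      ‖f x - f ζ‖ ≤ 2 * 3 ^ s / (2 ^ (s - β) - 1) * A * ρ ^ (s - β) := by
  set r : ℕ → ℝ := fun n => ρ / 2 ^ n with hr_def
  have hr_pos : ∀ n, 0 < r n := fun n => by positivity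
  have hr_le : ∀ n, r n ≤ ρ := fun n => div_le_self hρ.le (one_le_pow₀ one_le_two)
  choose x hx_mem hx_le using fun n => hgood (r n) (hr_pos n) (hr_le n)
  have hA : 0 ≤ A :=
    nonneg_of_mul_nonneg_left ((hg _).trans (hx_le 0)) (Real.rpow_pos_of_pos (hr_pos 0) _)
  set t : ℝ := 2 ^ (s - β)
  have ht : 1 < t := Real.one_lt_rpow one_lt_two (sub_pos.2 hβs)
  have hr_rpow : ∀ n, r n ^ (s - β) = ρ ^ (s - β) / t ^ n := fun n => by
    rw [Real.div_rpow hρ.le (by positivity), ← Real.rpow_pow_comm zero_le_two]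
  have hstep : ∀ n, dist (f (x n)) (f (x (n + 1))) ≤
      (2 * 3 ^ s * A * ρ ^ (s - β) / t) * t⁻¹ ^ n := fun n => by
    have hsucc : r n = 2 * r (n + 1) := by simp only [hr_def, pow_succ]; field_simp
    have hdist : dist (x n) (x (n + 1)) ≤ 3 * r (n + 1) := by
      have := dist_triangle_right (x n) (x (n + 1)) ζ
      linarith [mem_ball.1 (hx_mem n), mem_ball.1 (hx_mem (n + 1))]
    have hmono : r n ^ (-β) ≤ r (n + 1) ^ (-β) :=
      Real.rpow_le_rpow_of_nonpos (hr_pos _) (by linarith [hr_pos (n + 1)]) (neg_nonpos.2 hβ)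
    calc dist (f (x n)) (f (x (n + 1))) ≤ 2 * 3 ^ s * A * r (n + 1) ^ (s - β) := by
          rw [dist_eq_norm]
          exact norm_sub_le_of_le_mul_rpow_neg hf hg hs.le (hr_pos _) hdist
            ((hx_le n).trans (mul_le_mul_of_nonneg_left hmono hA)) (hx_le _)
      _ = (2 * 3 ^ s * A * ρ ^ (s - β) / t) * t⁻¹ ^ n := by
          rw [hr_rpow, pow_succ, inv_pow]; field_simp
  have hlim : Tendsto (fun n => f (x n)) atTop (𝓝 (f ζ)) := by
    have hr_lim : Tendsto r atTop (𝓝 0) :=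
      tendsto_const_nhds.div_atTop (tendsto_pow_atTop_atTop_of_one_lt one_lt_two)
    have hbound : ∀ n, ‖f (x n) - f ζ‖ ≤ A * r n ^ (s - β) + r n ^ s * g ζ := fun n =>
      calc ‖f (x n) - f ζ‖ ≤ dist (x n) ζ ^ s * (g (x n) + g ζ) := hf _ _
        _ ≤ r n ^ s * (A * r n ^ (-β) + g ζ) := by
          gcongr
          · exact add_nonneg (hg _) (hg _)
          · exact (mem_ball.1 (hx_mem n)).le
          · exact hx_le n
        _ = A * (r n ^ s * r n ^ (-β)) + r n ^ s * g ζ := by ring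
        _ = A * r n ^ (s - β) + r n ^ s * g ζ := by
          rw [← Real.rpow_add (hr_pos n), ← sub_eq_add_neg]
    have hbound_lim : Tendsto (fun n => A * r n ^ (s - β) + r n ^ s * g ζ) atTop (𝓝 0) := by
      have := ((hr_lim.rpow_const (Or.inr (sub_pos.2 hβs).le)).const_mul A).add
        ((hr_lim.rpow_const (Or.inr hs.le)).mul_const (g ζ))
      simpa [Real.zero_rpow hs.ne', Real.zero_rpow (sub_pos.2 hβs).ne'] using this
    exact tendsto_iff_norm_sub_tendsto_zero.2 <|
      squeeze_zero (fun _ => norm_nonneg _) hbound hbound_lim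
  refine ⟨x 0, by simpa [r] using hx_mem 0, by simpa [r] using hx_le 0, ?_⟩
  have := dist_le_of_le_geometric_of_tendsto₀ _ _ (inv_lt_one_of_one_lt₀ ht) hstep hlim
  rw [← dist_eq_norm]
  convert this using 1
  field_simp

-- Two chains of cost `2 * 3 ^ s / (2 ^ α - 1)` each, joined by one step of length `2 d(ξ, η)`.
def hajlaszHolderConst (s α : ℝ) : ℝ := 4 * 3 ^ s / (2 ^ α - 1) + 2 * 4 ^ s

lemma hajlaszHolderConst_pos (s : ℝ) {α : ℝ} (hα : 0 < α) : 0 < hajlaszHolderConst s α := by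
  have : 0 < (2 : ℝ) ^ α - 1 := sub_pos.2 (Real.one_lt_rpow one_lt_two hα)
  unfold hajlaszHolderConst
  positivity

lemma norm_sub_le_mul_dist_rpow_of_forall_exists_le
    (hf : ∀ x y, ‖f x - f y‖ ≤ dist x y ^ s * (g x + g y)) (hg : ∀ x, 0 ≤ g x) (hs : 0 < s)
    (hβ : 0 ≤ β) (hβs : β < s) {D : ℝ≥0∞}
    (hgood : ∀ ζ r, 0 < r → ENNReal.ofReal r < D → ∃ x ∈ ball ζ r, g x ≤ A * r ^ (-β))
    {ξ η : X} (hξη : edist ξ η ≤ D) :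
    ‖f ξ - f η‖ ≤ hajlaszHolderConst s (s - β) * A * dist ξ η ^ (s - β) := by
  rcases (dist_nonneg (x := ξ) (y := η)).eq_or_lt with hd | hd
  · have := hf ξ η
    rw [← hd, Real.zero_rpow hs.ne', zero_mul] at this
    rwa [← hd, Real.zero_rpow (sub_pos.2 hβs).ne', mul_zero]
  set ρ := dist ξ η / 2 with hρ_def
  have hρ : 0 < ρ := half_pos hd
  have hgood' : ∀ ζ r, 0 < r → r ≤ ρ → ∃ x ∈ ball ζ r, g x ≤ A * r ^ (-β) :=
    fun ζ r hr hrρ => hgood ζ r hr <| by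
      refine lt_of_lt_of_le ?_ (edist_dist ξ η ▸ hξη)
      exact (ENNReal.ofReal_lt_ofReal_iff hd).2 (by linarith)
  obtain ⟨a, ha, hga, hfa⟩ := exists_mem_ball_norm_sub_le hf hg hs hβ hβs ξ hρ (hgood' ξ)
  obtain ⟨b, hb, hgb, hfb⟩ := exists_mem_ball_norm_sub_le hf hg hs hβ hβs η hρ (hgood' η)
  have hA : 0 ≤ A :=
    nonneg_of_mul_nonneg_left ((hg a).trans hga) (Real.rpow_pos_of_pos hρ _)
  have hab : dist a b ≤ 4 * ρ := by
    have := dist_triangle4 a ξ η b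
    linarith [mem_ball.1 ha, mem_ball'.1 hb]
  have hmid := norm_sub_le_of_le_mul_rpow_neg hf hg hs.le hρ hab hga hgb
  calc ‖f ξ - f η‖ ≤ ‖f a - f ξ‖ + ‖f a - f b‖ + ‖f b - f η‖ := by
        rw [norm_sub_rev (f a)]
        simpa only [dist_eq_norm] using dist_triangle4 (f ξ) (f a) (f b) (f η)
    _ ≤ 2 * 3 ^ s / (2 ^ (s - β) - 1) * A * ρ ^ (s - β) + 2 * 4 ^ s * A * ρ ^ (s - β) +
          2 * 3 ^ s / (2 ^ (s - β) - 1) * A * ρ ^ (s - β) := by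
        gcongr
    _ = hajlaszHolderConst s (s - β) * A * ρ ^ (s - β) := by rw [hajlaszHolderConst]; ring
    _ ≤ hajlaszHolderConst s (s - β) * A * dist ξ η ^ (s - β) := by
        have := hajlaszHolderConst_pos s (sub_pos.2 hβs)
        gcongr
        linarith

lemma continuous_of_norm_sub_le_mul_dist_rpow {C α : ℝ} (hα : 0 < α)
    (h : ∀ x y, ‖f x - f y‖ ≤ C * dist x y ^ α) : Continuous f := by
  refine continuous_iff_continuousAt.2 fun y => tendsto_iff_norm_sub_tendsto_zero.2 ?_
  refine squeeze_zero (fun _ => norm_nonneg _) (fun x => h x y) ?_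
  have hdist : Tendsto (fun x => dist x y) (𝓝 y) (𝓝 0) :=
    (continuous_id.dist continuous_const).tendsto' y 0 (dist_self y)
  simpa [Real.zero_rpow hα.ne'] using (hdist.rpow_const (Or.inr hα.le)).const_mul C

end HolderEstimate

-- No finiteness of `μ S` is needed: `(μ S).toReal⁻¹ = 0` when `μ S = ⊤`.
lemma toReal_inv_mul_setIntegral_le {X : Type*} [MeasurableSpace X] {μ : Measure X}
    {S : Set X} {h : X → ℝ} {M : ℝ} (hM : 0 ≤ M) (hh : ∀ x ∈ S, ‖h x‖ ≤ M) :
    (μ S).toReal⁻¹ * ∫ x in S, h x ∂μ ≤ M := by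
  rcases eq_or_ne (μ S) ⊤ with htop | hfin
  · simp [htop, hM]
  have hint := norm_setIntegral_le_of_norm_le_const hfin.lt_top hh
  rcases (ENNReal.toReal_nonneg (a := μ S)).eq_or_lt with h0 | hpos
  · simp [← h0, hM]
  calc (μ S).toReal⁻¹ * ∫ x in S, h x ∂μ ≤ (μ S).toReal⁻¹ * (M * (μ S).toReal) := by
        gcongr
        exact (le_abs_self _).trans hint
    _ = M := by field_simp

lemma ContinuousAt.tendsto_toReal_inv_mul_setIntegral_ball_norm_sub {X E : Type*}
    [PseudoMetricSpace X] [MeasurableSpace X] [SeminormedAddCommGroup E] (μ : Measure X)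
    {f : X → E} {ξ : X} (hf : ContinuousAt f ξ) :
    Tendsto (fun r : ℝ => (μ (ball ξ r)).toReal⁻¹ * ∫ x in ball ξ r, ‖f x - f ξ‖ ∂μ)
      (𝓝[>] 0) (𝓝 0) := by
  rw [Metric.tendsto_nhds]
  intro ε hε
  obtain ⟨δ, hδ, hfδ⟩ := Metric.continuousAt_iff.1 hf (ε / 2) (half_pos hε)
  filter_upwards [Ioo_mem_nhdsGT hδ] with r hr
  have hle := toReal_inv_mul_setIntegral_le (μ := μ) (S := ball ξ r)
      (h := fun x => ‖f x - f ξ‖) (half_pos hε).le fun x hx => by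
    rw [norm_norm, ← dist_eq_norm]
    exact (hfδ ((mem_ball.1 hx).trans hr.2)).le
  have hnn : 0 ≤ (μ (ball ξ r)).toReal⁻¹ * ∫ x in ball ξ r, ‖f x - f ξ‖ ∂μ :=
    mul_nonneg (inv_nonneg.2 ENNReal.toReal_nonneg) (integral_nonneg fun _ => norm_nonneg _)
  rw [Real.dist_eq, sub_zero, abs_of_nonneg hnn]
  linarith

lemma exists_mem_ofReal_le_inv_rpow_mul_lpNorm {X : Type*} [MeasurableSpace X] (μ : Measure X)
    {p : ℝ} (hp : 0 < p) {g : X → ℝ} (hg : Measurable g) {B : Set X} (hB₀ : μ B ≠ 0)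
    (hB : μ B ≠ ⊤) :
    ∃ x ∈ B, ENNReal.ofReal (g x) ≤ (μ B)⁻¹ ^ (1 / p) * lpNorm μ p g := by
  obtain ⟨x, hxB, hx⟩ :=
    exists_le_setLAverage hB₀ hB (hg.ennreal_ofReal.pow_const p).aemeasurable
  refine ⟨x, hxB, ?_⟩
  have havg : ⨍⁻ y in B, ENNReal.ofReal (g y) ^ p ∂μ ≤
      (μ B)⁻¹ * ∫⁻ y, ENNReal.ofReal (g y) ^ p ∂μ := by
    rw [setLAverage_eq, ENNReal.div_eq_inv_mul]
    gcongr
    exact Measure.restrict_le_self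
  calc ENNReal.ofReal (g x) = (ENNReal.ofReal (g x) ^ p) ^ (1 / p) := by
        rw [← ENNReal.rpow_mul, mul_one_div_cancel hp.ne', ENNReal.rpow_one]
    _ ≤ ((μ B)⁻¹ * ∫⁻ y, ENNReal.ofReal (g y) ^ p ∂μ) ^ (1 / p) := by
        gcongr
        exact hx.trans havg
    _ = (μ B)⁻¹ ^ (1 / p) * lpNorm μ p g := ENNReal.mul_rpow_of_nonneg _ _ (by positivity)

lemma exists_mem_ball_le_of_isAhlforsOn {X : Type*} [MetricSpace X] [MeasurableSpace X]
    {μ : Measure X} {Q CZ p : ℝ} (hreg : IsAhlforsOn μ univ Q CZ) (hp : 0 < p) {g : X → ℝ}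
    (hg : Measurable g) (hfin : lpNorm μ p g ≠ ⊤) {ζ : X} {r : ℝ} (hr : 0 < r)
    (hrD : ENNReal.ofReal r < Metric.ediam (univ : Set X)) :
    ∃ x ∈ ball ζ r, g x ≤ CZ ^ (1 / p) * (lpNorm μ p g).toReal * r ^ (-(Q / p)) := by
  obtain ⟨hC, hball⟩ := hreg
  have hC₀ : 0 < CZ := one_pos.trans_le hC
  obtain ⟨hlow, hup⟩ := hball ζ trivial r hr hrD
  have hc : 0 < CZ⁻¹ * r ^ Q := by positivity
  have hB₀ : μ (ball ζ r) ≠ 0 := ((ENNReal.ofReal_pos.2 hc).trans_le hlow).ne'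
  have hB : μ (ball ζ r) ≠ ⊤ := (hup.trans_lt ENNReal.ofReal_lt_top).ne
  obtain ⟨x, hx, hgx⟩ := exists_mem_ofReal_le_inv_rpow_mul_lpNorm μ hp hg hB₀ hB
  refine ⟨x, hx, (ENNReal.ofReal_le_ofReal_iff (by positivity)).1 ?_⟩
  have hinv : (μ (ball ζ r))⁻¹ ≤ ENNReal.ofReal (CZ * r ^ (-Q)) := by
    rw [show CZ * r ^ (-Q) = (CZ⁻¹ * r ^ Q)⁻¹ by rw [mul_inv, inv_inv, Real.rpow_neg hr.le],
      ENNReal.ofReal_inv_of_pos hc]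
    exact ENNReal.inv_le_inv.2 hlow
  calc ENNReal.ofReal (g x) ≤ (μ (ball ζ r))⁻¹ ^ (1 / p) * lpNorm μ p g := hgx
    _ ≤ ENNReal.ofReal (CZ * r ^ (-Q)) ^ (1 / p) * ENNReal.ofReal (lpNorm μ p g).toReal := by
        rw [ENNReal.ofReal_toReal hfin]
        gcongr
    _ = ENNReal.ofReal (CZ ^ (1 / p) * (lpNorm μ p g).toReal * r ^ (-(Q / p))) := by
        rw [ENNReal.ofReal_rpow_of_pos (by positivity), ← ENNReal.ofReal_mul (by positivity),
          Real.mul_rpow hC₀.le (by positivity), ← Real.rpow_mul hr.le]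
        ring_nf

theorem hajlasz_holder_representative_general
    (μ : Measure Z) (Q CZ s p : ℝ)
    (hQ : 0 < Q)
    (hZreg : IsAhlforsOn μ (Set.univ : Set Z) Q CZ)
    (hs0 : 0 < s) (hp : Q / s < p) :
    ∃ C : ℝ, 0 < C ∧ ∀ (f : Z → ℂ) (g : Z → ℝ),
      LocallyIntegrable f μ →
      IsHajlaszGrad s f g →
      lpNorm μ p g < ⊤ →
      ∃ ft : Z → ℂ, Continuous ft ∧ f =ᵐ[μ] ft ∧
        (∀ ξ η : Z, ‖ft ξ - ft η‖ ≤ C * dist ξ η ^ (s - Q / p) * (lpNorm μ p g).toReal) ∧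
        ∀ ξ : Z,
          Tendsto (fun r : ℝ => (μ (ball ξ r)).toReal⁻¹ * ∫ x in ball ξ r, ‖ft x - ft ξ‖ ∂μ)
            (nhdsWithin 0 (Ioi 0)) (nhds 0) := by
  have hp₀ : 0 < p := (div_pos hQ hs0).trans hp
  have hβs : Q / p < s := by
    rw [div_lt_iff₀ hs0] at hp
    rw [div_lt_iff₀ hp₀]
    linarith
  have hC₀ : 0 < CZ := one_pos.trans_le hZreg.1
  refine ⟨hajlaszHolderConst s (s - Q / p) * CZ ^ (1 / p),
    mul_pos (hajlaszHolderConst_pos s (sub_pos.2 hβs)) (by positivity), fun f g _ hg hgp => ?_⟩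
  obtain ⟨hg_meas, hg_nonneg, hf⟩ := hg
  have holder : ∀ ξ η : Z, ‖f ξ - f η‖ ≤ hajlaszHolderConst s (s - Q / p) * CZ ^ (1 / p) *
      dist ξ η ^ (s - Q / p) * (lpNorm μ p g).toReal := fun ξ η =>
    (norm_sub_le_mul_dist_rpow_of_forall_exists_le hf hg_nonneg hs0 (div_pos hQ hp₀).le hβs
      (fun _ _ hr hrD => exists_mem_ball_le_of_isAhlforsOn hZreg hp₀ hg_meas hgp.ne hr hrD)
      (Metric.edist_le_ediam_of_mem (mem_univ ξ) (mem_univ η))).trans_eq (by ring)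
  have hcont : Continuous f := continuous_of_norm_sub_le_mul_dist_rpow (sub_pos.2 hβs)
    fun ξ η => (holder ξ η).trans_eq (mul_right_comm _ _ _)
  exact ⟨f, hcont, .rfl, holder, fun ξ =>
    hcont.continuousAt.tendsto_toReal_inv_mul_setIntegral_ball_norm_sub μ⟩

/-- **Remark 3.2.** For `p > Q/s`, every `f ∈ Ṁ^{s,p}(Z)` has a continuous
(`(s-Q/p)`-Hölder) representative, and every point is a generalized Lebesgue point of
this representative. -/
theorem hajlasz_holder_representative
    (μ : Measure Z) (Q CZ s p : ℝ)
    (hμ : IsMetricMeasure μ) (hQ : 0 < Q)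
    (hZreg : IsAhlforsOn μ (Set.univ : Set Z) Q CZ)
    (hs0 : 0 < s) (hs1 : s ≤ 1) (hp : Q / s < p) :
    ∃ C : ℝ, 0 < C ∧ ∀ (f : Z → ℂ) (g : Z → ℝ),
      LocallyIntegrable f μ →
      IsHajlaszGrad s f g →
      lpNorm μ p g < ⊤ →
      ∃ ft : Z → ℂ, Continuous ft ∧ f =ᵐ[μ] ft ∧
        (∀ ξ η : Z, ‖ft ξ - ft η‖ ≤ C * dist ξ η ^ (s - Q / p) * (lpNorm μ p g).toReal) ∧
        ∀ ξ : Z,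
          Tendsto (fun r : ℝ => (μ (ball ξ r)).toReal⁻¹ * ∫ x in ball ξ r, ‖ft x - ft ξ‖ ∂μ)
            (nhdsWithin 0 (Ioi 0)) (nhds 0) :=
  hajlasz_holder_representative_general μ Q CZ s p hQ hZreg hs0 hp
end
end

section
/- Let (Z,d) be a metric space, F ⊂ Z a nonempty closed subset, and n ∈ ℤ. Then there exist sets S' ⊂ { ξ ∈ Z : dist(ξ,F) ≥ 2^{−n} } and S'' ⊂ F such that: (a) d(ξ,ξ') ≥ 2^{−n−1} for all distinct ξ,ξ' ∈ S'; (b) d(ξ,ξ') ≥ 2^{−n} for all distinct ξ,ξ' ∈ S''; (c) every ζ ∈ Z satisfies dist(ζ,S') < 2^{−n−1} or dist(ζ,S'') < 2^{−n+1}; (d) every η ∈ F satisfies dist(η,S'') < 2^{−n}; and (e) B(ξ,2^{−n}) ∩ F = ∅ for every ξ ∈ S'. (Core content of Lemma 2.3: hyperbolic fillings of Z can be chosen so that the balls meeting F are centered in F and their restrictions generate a hyperbolic filling of F.) -/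
open Metric Set

/-- Maximal `r`-separated subset of `A`: separated and `r`-dense in `A`. -/
lemma exists_maximal_separated {Z : Type*} [MetricSpace Z] (A : Set Z) {r : ℝ}
    (hr : 0 < r) :
    ∃ S ⊆ A, (∀ x ∈ S, ∀ y ∈ S, x ≠ y → r ≤ dist x y) ∧
      ∀ a ∈ A, ∃ x ∈ S, dist a x < r := by
  have hch : ∀ c ⊆ {S : Set Z | S ⊆ A ∧ ∀ x ∈ S, ∀ y ∈ S, x ≠ y → r ≤ dist x y},
      IsChain (· ⊆ ·) c → ∃ ub ∈ {S : Set Z | S ⊆ A ∧ ∀ x ∈ S, ∀ y ∈ S, x ≠ y → r ≤ dist x y},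
        ∀ s ∈ c, s ⊆ ub := by
    intro c hc hchain
    refine ⟨⋃₀ c, ⟨sUnion_subset fun s hs => (hc hs).1, ?_⟩, fun s hs => subset_sUnion_of_mem hs⟩
    rintro x ⟨s, hs, hxs⟩ y ⟨t, ht, hyt⟩ hxy
    rcases hchain.total hs ht with h | h
    · exact (hc ht).2 x (h hxs) y hyt hxy
    · exact (hc hs).2 x hxs y (h hyt) hxy
  obtain ⟨S, hSP, hmax⟩ := zorn_subset
      {S : Set Z | S ⊆ A ∧ ∀ x ∈ S, ∀ y ∈ S, x ≠ y → r ≤ dist x y} hch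
  refine ⟨S, hSP.1, hSP.2, fun a ha => ?_⟩
  by_contra h
  push_neg at h
  have haS : a ∉ S := fun haS => by
    have := h a haS; rw [dist_self] at this; linarith
  have hins : insert a S ∈ {S : Set Z | S ⊆ A ∧ ∀ x ∈ S, ∀ y ∈ S, x ≠ y → r ≤ dist x y} := by
    refine ⟨insert_subset ha hSP.1, ?_⟩
    rintro x (rfl | hx) y (rfl | hy) hxy
    · exact absurd rfl hxy
    · exact h y hy
    · rw [dist_comm]; exact h x hx
    · exact hSP.2 x hx y hy hxy
  exact haS (hmax hins (subset_insert a S) (mem_insert a S))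

/-- **Core content of Lemma 2.3.** Hyperbolic fillings of `Z` can be chosen so that the
balls meeting `F` are centered in `F` and their restrictions generate a hyperbolic
filling of `F`. -/
theorem filling_choice
    {Z : Type*} [MetricSpace Z] (F : Set Z) (hFc : IsClosed F) (hFne : F.Nonempty)
    (n : ℤ) :
    ∃ S' S'' : Set Z,
      S' ⊆ {ξ : Z | (2 : ℝ) ^ (-n) ≤ infDist ξ F} ∧
      S'' ⊆ F ∧
      (∀ ξ ∈ S', ∀ ξ' ∈ S', ξ ≠ ξ' → (2 : ℝ) ^ (-n - 1) ≤ dist ξ ξ') ∧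
      (∀ ξ ∈ S'', ∀ ξ' ∈ S'', ξ ≠ ξ' → (2 : ℝ) ^ (-n) ≤ dist ξ ξ') ∧
      (∀ ζ : Z, (∃ ξ ∈ S', dist ζ ξ < (2 : ℝ) ^ (-n - 1)) ∨
                (∃ ξ ∈ S'', dist ζ ξ < (2 : ℝ) ^ (-n + 1))) ∧
      (∀ η ∈ F, ∃ ξ ∈ S'', dist η ξ < (2 : ℝ) ^ (-n)) ∧
      (∀ ξ ∈ S', ball ξ ((2 : ℝ) ^ (-n)) ∩ F = ∅) := by
  have h2 : ∀ m : ℤ, (0 : ℝ) < 2 ^ m := fun m => zpow_pos (by norm_num) m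
  set A : Set Z := {ξ : Z | (2 : ℝ) ^ (-n) ≤ infDist ξ F} with hA
  obtain ⟨S', hS'A, hS'sep, hS'dense⟩ := exists_maximal_separated A (h2 (-n - 1))
  obtain ⟨S'', hS''F, hS''sep, hS''dense⟩ := exists_maximal_separated F (h2 (-n))
  refine ⟨S', S'', hS'A, hS''F, hS'sep, hS''sep, ?_, hS''dense, ?_⟩
  · intro ζ
    by_cases hζ : ζ ∈ A
    · exact Or.inl (hS'dense ζ hζ)
    · right
      simp only [hA, mem_setOf_eq, not_le] at hζ
      obtain ⟨η, hηF, hηd⟩ := (infDist_lt_iff hFne).mp hζ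
      obtain ⟨ξ, hξS, hξd⟩ := hS''dense η hηF
      refine ⟨ξ, hξS, lt_of_le_of_lt (dist_triangle ζ η ξ) ?_⟩
      have : (2 : ℝ) ^ (-n + 1) = 2 ^ (-n) + 2 ^ (-n) := by
        rw [zpow_add_one₀ (by norm_num : (2:ℝ) ≠ 0)]; ring
      rw [this]
      exact add_lt_add hηd hξd
  · intro ξ hξ
    have hξA : (2 : ℝ) ^ (-n) ≤ infDist ξ F := hS'A hξ
    ext η
    simp only [mem_inter_iff, mem_ball, mem_empty_iff_false, iff_false, not_and]
    intro hd hηF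
    exact absurd (le_trans hξA (infDist_le_dist_of_mem hηF)) (by rw [dist_comm] at hd; exact not_le.mpr hd)
end

section
/- Let (Z,d) be a metric space, F ⊂ Z a subset, K ≥ 1 and N ∈ ℕ. Let (ξ_i)_{i∈I}, (r_i)_{i∈I}, (η_i)_{i∈I}, (s_i)_{i∈I} be families with ξ_i, η_i ∈ Z and r_i, s_i > 0 satisfying, for every i ∈ I: (1) B(ξ_i,r_i) ∩ F ≠ ∅; (2) B(η_i,s_i) ⊂ B(ξ_i,r_i); (3) B(η_i,2s_i) ∩ F = ∅; (4) B(ξ_i,r_i) ⊂ B(η_i,K s_i). Assume moreover the scale-wise bounded overlap condition: for every ζ ∈ Z and every j ∈ ℤ, the number of indices i with 2^{−j} ≤ s_i < 2^{−j+1} and ζ ∈ B(η_i,s_i) is at most N. Then there exists M ∈ ℕ, depending only on K and N, such that for every ζ ∈ Z the number of indices i ∈ I with ζ ∈ B(η_i,s_i) is at most M. (Bounded multiplicity claim at the heart of Lemma 4.1, which shows that for sequences supported above a porous set the Triebel–Lizorkin sequence norms ‖·‖_{J^s_{p,q}} are equivalent for all q.) -/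
/-!
Two balls `B(ηᵢ,sᵢ)`, `B(ηₖ,sₖ)` through a common point `ζ` have comparable radii: a point `z ∈ F`
of `B(ξₖ,rₖ) ⊆ B(ηₖ,K sₖ)` lies outside `B(ηᵢ,2sᵢ)`, and the triangle inequality through `ζ` gives
`sᵢ < (1 + K) sₖ`. Hence the balls containing `ζ` occupy at most `2⌈log₂(1 + K)⌉ + 1` consecutive
dyadic scales, each of which contributes at most `N` of them.
-/

open Metric Set

lemma lt_one_add_mul_of_mem_ball {Z : Type*} [PseudoMetricSpace Z] {a b z ζ : Z} {s t K : ℝ}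
    (hζa : ζ ∈ ball a s) (hζb : ζ ∈ ball b t) (hzb : z ∈ ball b (K * t))
    (hza : z ∉ ball a (2 * s)) : s < (1 + K) * t := by
  rw [mem_ball] at hζa hζb hzb
  have hfar : 2 * s ≤ dist z a := not_lt.mp hza
  have hpath : dist z a ≤ dist z b + dist ζ b + dist ζ a := by
    linarith [dist_triangle z b a, dist_triangle_left b a ζ]
  linarith

lemma Int.log_le_log_add_clog {R : Type*} [Field R] [LinearOrder R] [IsStrictOrderedRing R]
    [FloorRing R] {b : ℕ} (hb : 1 < b) {x y C : R} (hx : 0 < x) (hy : 0 ≤ y) (hxy : x < C * y) :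
    Int.log b x ≤ Int.log b y + Int.clog b C := by
  have hb' : (1 : R) < b := by exact_mod_cast hb
  have hpow : (b : R) ^ Int.log b x < (b : R) ^ (Int.log b y + Int.clog b C + 1) :=
    calc (b : R) ^ Int.log b x ≤ x := Int.zpow_log_le_self hb hx
      _ < C * y := hxy
      _ ≤ (b : R) ^ Int.clog b C * (b : R) ^ (Int.log b y + 1) :=
        mul_le_mul (Int.self_le_zpow_clog hb C) (Int.lt_zpow_succ_log_self hb y).le hy
          (zpow_nonneg (by positivity) _)
      _ = (b : R) ^ (Int.log b y + Int.clog b C + 1) := by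
        rw [← zpow_add₀ (by positivity)]; ring_nf
  have := (zpow_lt_zpow_iff_right₀ hb').mp hpow
  omega

lemma Set.encard_le_card_mul_of_mapsTo {ι κ : Type*} {S : Set ι} {g : ι → κ} {t : Finset κ}
    {N : ℕ∞} (hg : MapsTo g S t) (hfiber : ∀ j ∈ t, {i ∈ S | g i = j}.encard ≤ N) :
    S.encard ≤ t.card * N :=
  calc S.encard ≤ (⋃ j ∈ t, {i ∈ S | g i = j}).encard :=
        encard_mono fun i hi ↦ mem_biUnion (hg hi) ⟨hi, rfl⟩
    _ ≤ ∑ j ∈ t, {i ∈ S | g i = j}.encard := t.set_encard_biUnion_le _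
    _ ≤ ∑ _j ∈ t, N := Finset.sum_le_sum hfiber
    _ = t.card * N := by rw [Finset.sum_const, nsmul_eq_mul]

lemma Set.encard_le_of_fiber_le_of_le_add {ι : Type*} {S : Set ι} {g : ι → ℤ} {L : ℤ} {N : ℕ}
    (hspread : ∀ i ∈ S, ∀ k ∈ S, g i ≤ g k + L) (hfiber : ∀ j, {i ∈ S | g i = j}.encard ≤ N) :
    S.encard ≤ (N * (2 * L.toNat + 1) : ℕ) := by
  rcases S.eq_empty_or_nonempty with rfl | ⟨i₀, hi₀⟩
  · simp
  have hwindow : MapsTo g S (Finset.Icc (g i₀ - L) (g i₀ + L)) := fun i hi ↦ by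
    have := hspread i hi i₀ hi₀
    have := hspread i₀ hi₀ i hi
    simp only [Finset.coe_Icc, mem_Icc]
    omega
  have hL : 0 ≤ L := by linarith [hspread i₀ hi₀ i₀ hi₀]
  have hcard : (Finset.Icc (g i₀ - L) (g i₀ + L)).card = 2 * L.toNat + 1 := by
    rw [Int.card_Icc]; omega
  calc S.encard ≤ (Finset.Icc (g i₀ - L) (g i₀ + L)).card * (N : ℕ∞) :=
        encard_le_card_mul_of_mapsTo hwindow fun j _ ↦ hfiber j
    _ = (N * (2 * L.toNat + 1) : ℕ) := by rw [hcard]; push_cast; ring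

theorem bounded_multiplicity_general (K : ℝ) (N : ℕ) :
    ∃ M : ℕ, ∀ (Z : Type) [MetricSpace Z], ∀ (F : Set Z) (I : Type)
      (ξ η : I → Z) (r s : I → ℝ),
      (∀ i : I, 0 < r i) → (∀ i : I, 0 < s i) →
      (∀ i : I, (ball (ξ i) (r i) ∩ F).Nonempty) →
      (∀ i : I, ball (η i) (s i) ⊆ ball (ξ i) (r i)) →
      (∀ i : I, ball (η i) (2 * s i) ∩ F = ∅) →
      (∀ i : I, ball (ξ i) (r i) ⊆ ball (η i) (K * s i)) →
      (∀ (ζ : Z) (j : ℤ),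
        ({i : I | (2 : ℝ) ^ (-j) ≤ s i ∧ s i < (2 : ℝ) ^ (-j + 1) ∧
          ζ ∈ ball (η i) (s i)}).encard ≤ (N : ℕ∞)) →
      ∀ ζ : Z, ({i : I | ζ ∈ ball (η i) (s i)}).encard ≤ (M : ℕ∞) := by
  refine ⟨N * (2 * (Int.clog 2 (1 + K)).toNat + 1), ?_⟩
  intro Z _ F I ξ η r s _ hs hmeet _ hfree hinside hscale ζ
  refine encard_le_of_fiber_le_of_le_add (g := fun i ↦ Int.log 2 (s i)) ?_ fun j ↦ ?_
  · intro i hi k hk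
    obtain ⟨z, hzξ, hzF⟩ := hmeet k
    have hz : z ∉ ball (η i) (2 * s i) := fun hz ↦
      eq_empty_iff_forall_notMem.mp (hfree i) z ⟨hz, hzF⟩
    exact Int.log_le_log_add_clog one_lt_two (hs i) (hs k).le
      (lt_one_add_mul_of_mem_ball hi hk (hinside k hzξ) hz)
  · refine (encard_mono ?_).trans (hscale ζ (-j))
    rintro i ⟨hi, rfl⟩
    refine ⟨?_, ?_, hi⟩ <;> rw [neg_neg]
    · exact_mod_cast Int.zpow_log_le_self one_lt_two (hs i)
    · exact_mod_cast Int.lt_zpow_succ_log_self one_lt_two (s i)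

/-- **Bounded multiplicity claim at the heart of Lemma 4.1.** For families of balls
arising from porosity (each ball `B(ξᵢ,rᵢ)` meets `F`, contains `B(ηᵢ,sᵢ)` with
`B(ηᵢ,2sᵢ)` disjoint from `F`, and is contained in `B(ηᵢ,Ksᵢ)`), a scale-wise bounded
overlap of the balls `B(ηᵢ,sᵢ)` implies a global bounded overlap, with bound depending
only on `K` and `N`. -/
theorem bounded_multiplicity (K : ℝ) (hK : 1 ≤ K) (N : ℕ) :
    ∃ M : ℕ, ∀ (Z : Type) [MetricSpace Z], ∀ (F : Set Z) (I : Type)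
      (ξ η : I → Z) (r s : I → ℝ),
      (∀ i : I, 0 < r i) → (∀ i : I, 0 < s i) →
      (∀ i : I, (ball (ξ i) (r i) ∩ F).Nonempty) →
      (∀ i : I, ball (η i) (s i) ⊆ ball (ξ i) (r i)) →
      (∀ i : I, ball (η i) (2 * s i) ∩ F = ∅) →
      (∀ i : I, ball (ξ i) (r i) ⊆ ball (η i) (K * s i)) →
      (∀ (ζ : Z) (j : ℤ),
        ({i : I | (2 : ℝ) ^ (-j) ≤ s i ∧ s i < (2 : ℝ) ^ (-j + 1) ∧
          ζ ∈ ball (η i) (s i)}).encard ≤ (N : ℕ∞)) →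
      ∀ ζ : Z, ({i : I | ζ ∈ ball (η i) (s i)}).encard ≤ (M : ℕ∞) :=
  bounded_multiplicity_general K N
end
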